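/- Let p' ∈ (1,∞), set q = p'/(p'−1), and suppose there is a constant C > 0 such that p_t(x,y) ≤ C t^{−q} for all t > 0 and x,y ∈ E. Let p ∈ [1,p') and δ = 1 − q(p−1)/p (so δ > 0). Then for every α > 0, sup_{x∈E} (∫_E r_α(x,y)^p m(dy))^{1/p} ≤ C^{(p−1)/p} Γ(δ) α^{−δ}, where Γ is the Gamma function. In particular, the reference measure m belongs to the L^p-Kato class with order δ. -/

import Mathlib

open MeasureTheory ENNReal Set Filter

/-- The α-order resolvent kernel of a heat kernel `P`. -/
noncomputable def heatResolvent {E : Type*} [MeasurableSpace E]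
    (P : ℝ → E → E → ℝ≥0∞) (α : ℝ) (x y : E) : ℝ≥0∞ :=
  ∫⁻ t in Set.Ioi (0:ℝ), ENNReal.ofReal (Real.exp (-(α * t))) * P t x y

/-!
Write the resolvent as `∫ w(t) f_t dt` with the Gamma weight `w(t) = e^{-αt} t^{δ-1}`, of total
mass `Γ(δ) α^{-δ}`, and `f_t = t^{1-δ} p_t(x, ·)`. Jensen's inequality for the finite measure
`w(t) dt` bounds `r_α(x, y)^p` by `(Γ(δ) α^{-δ})^{p-1} ∫ w(t) f_t(y)^p dt`. Integrating in `y`,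
sub-Markovianity and the on-diagonal bound give `∫ p_t(x, y)^p m(dy) ≤ (C t^{-q})^{p-1}`, and the
choice of `δ` makes `t^{(1-δ)p} (t^{-q})^{p-1} = 1`, so the time integral is again
`∫ w = Γ(δ) α^{-δ}`.
-/

theorem rpow_lintegral_mul_le {α : Type*} [MeasurableSpace α] {μ : Measure α} {p : ℝ}
    (hp : 1 ≤ p) {w f : α → ℝ≥0∞} (hw : AEMeasurable w μ) (hf : AEMeasurable f μ) :
    (∫⁻ a, w a * f a ∂μ) ^ p ≤ (∫⁻ a, w a ∂μ) ^ (p - 1) * ∫⁻ a, w a * f a ^ p ∂μ := by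
  have hp0 : 0 < p := zero_lt_one.trans_le hp
  set ν := μ.withDensity w
  have hfν : AEMeasurable f ν := hf.mono_ac (withDensity_absolutelyContinuous μ w)
  have hholder := eLpNorm'_le_eLpNorm'_mul_rpow_measure_univ zero_lt_one hp
    hfν.aestronglyMeasurable
  simp only [eLpNorm', enorm_eq_self, ENNReal.rpow_one, div_one, ν,
    withDensity_apply _ MeasurableSet.univ, Measure.restrict_univ] at hholder
  rw [lintegral_withDensity_eq_lintegral_mul₀ hw hf,
    lintegral_withDensity_eq_lintegral_mul₀ hw (hf.pow_const p)] at hholder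
  calc (∫⁻ a, w a * f a ∂μ) ^ p
      ≤ ((∫⁻ a, w a * f a ^ p ∂μ) ^ (1 / p) * (∫⁻ a, w a ∂μ) ^ (1 - 1 / p)) ^ p :=
        ENNReal.rpow_le_rpow hholder hp0.le
    _ = (∫⁻ a, w a ∂μ) ^ (p - 1) * ∫⁻ a, w a * f a ^ p ∂μ := by
        rw [ENNReal.mul_rpow_of_nonneg _ _ hp0.le, ← ENNReal.rpow_mul, ← ENNReal.rpow_mul,
          one_div_mul_cancel hp0.ne', ENNReal.rpow_one, sub_mul, one_div_mul_cancel hp0.ne',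
          one_mul, mul_comm]

theorem lintegral_rpow_le_mul_lintegral_of_le {α : Type*} [MeasurableSpace α] {μ : Measure α}
    {p : ℝ} (hp : 1 ≤ p) {f : α → ℝ≥0∞} {K : ℝ≥0∞} (hK : K ≠ ∞) (hfK : ∀ a, f a ≤ K) :
    ∫⁻ a, f a ^ p ∂μ ≤ K ^ (p - 1) * ∫⁻ a, f a ∂μ := by
  have hp1 : 0 ≤ p - 1 := sub_nonneg.2 hp
  calc ∫⁻ a, f a ^ p ∂μ = ∫⁻ a, f a ^ (p - 1) * f a ∂μ := by
        congr! 2 with a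
        simpa using ENNReal.rpow_add_of_nonneg (x := f a) _ _ hp1 zero_le_one
    _ ≤ ∫⁻ a, K ^ (p - 1) * f a ∂μ := by gcongr with a; exact hfK a
    _ = K ^ (p - 1) * ∫⁻ a, f a ∂μ :=
        lintegral_const_mul' _ _ (ENNReal.rpow_ne_top_of_nonneg hp1 hK)

theorem lintegral_exp_neg_mul_mul_rpow_Ioi {α δ : ℝ} (hα : 0 < α) (hδ : 0 < δ) :
    ∫⁻ t in Ioi (0:ℝ), ENNReal.ofReal (Real.exp (-(α * t)) * t ^ (δ - 1))
      = ENNReal.ofReal (Real.Gamma δ * α ^ (-δ)) := by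
  have hint : IntegrableOn (fun t : ℝ => Real.exp (-(α * t)) * t ^ (δ - 1)) (Ioi 0) := by
    simpa [Real.rpow_one, neg_mul, mul_comm] using
      integrableOn_rpow_mul_exp_neg_mul_rpow (by linarith : (-1:ℝ) < δ - 1) zero_lt_one hα
  rw [← ofReal_integral_eq_lintegral_ofReal hint]
  · simp_rw [mul_comm (Real.exp _)]
    rw [Real.integral_rpow_mul_exp_neg_mul_Ioi hδ hα, one_div, Real.inv_rpow hα.le,
      ← Real.rpow_neg hα.le, mul_comm]
  · filter_upwards [ae_restrict_mem measurableSet_Ioi] with t ht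
    exact mul_nonneg (Real.exp_nonneg _) (Real.rpow_nonneg (le_of_lt ht) _)

section HeatResolvent

variable {E : Type*} [MeasurableSpace E] {P : ℝ → E → E → ℝ≥0∞}

theorem heatResolvent_eq_setLIntegral_rpow (α δ : ℝ) (x y : E) :
    heatResolvent P α x y = ∫⁻ t in Ioi 0, ENNReal.ofReal (Real.exp (-(α * t)) * t ^ (δ - 1)) *
      (ENNReal.ofReal (t ^ (1 - δ)) * P t x y) := by
  refine setLIntegral_congr_fun measurableSet_Ioi fun t (ht : 0 < t) => ?_
  rw [← mul_assoc, ← ENNReal.ofReal_mul (by positivity), mul_assoc, ← Real.rpow_add ht]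
  simp

theorem heatResolvent_rpow_le {α δ p : ℝ} (hα : 0 < α) (hδ : 0 < δ) (hp : 1 ≤ p) {x y : E}
    (hP : Measurable fun t => P t x y) :
    heatResolvent P α x y ^ p ≤ ENNReal.ofReal (Real.Gamma δ * α ^ (-δ)) ^ (p - 1) *
      ∫⁻ t in Ioi 0, ENNReal.ofReal (Real.exp (-(α * t)) * t ^ (δ - 1)) *
        (ENNReal.ofReal (t ^ (1 - δ)) * P t x y) ^ p := by
  rw [heatResolvent_eq_setLIntegral_rpow α δ, ← lintegral_exp_neg_mul_mul_rpow_Ioi hα hδ]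
  exact rpow_lintegral_mul_le hp (by fun_prop) (by fun_prop)

theorem lintegral_weighted_heatKernel_rpow_le (m : Measure E) {C q δ p t : ℝ} (hC : 0 ≤ C)
    (hp : 1 ≤ p) (ht : 0 < t) (hqδ : q * (p - 1) = (1 - δ) * p) {x : E}
    (hsub : ∫⁻ y, P t x y ∂m ≤ 1) (hultra : ∀ y, P t x y ≤ ENNReal.ofReal (C * t ^ (-q))) :
    ∫⁻ y, (ENNReal.ofReal (t ^ (1 - δ)) * P t x y) ^ p ∂m ≤ ENNReal.ofReal (C ^ (p - 1)) := by
  have hp0 : 0 ≤ p := zero_le_one.trans hp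
  have hp1 : 0 ≤ p - 1 := sub_nonneg.2 hp
  have hweight : t ^ ((1 - δ) * p) * (C * t ^ (-q)) ^ (p - 1) = C ^ (p - 1) := by
    rw [Real.mul_rpow hC (by positivity), ← Real.rpow_mul ht.le, mul_left_comm,
      ← Real.rpow_add ht, ← hqδ, neg_mul, add_neg_cancel, Real.rpow_zero, mul_one]
  calc ∫⁻ y, (ENNReal.ofReal (t ^ (1 - δ)) * P t x y) ^ p ∂m
      = ENNReal.ofReal (t ^ (1 - δ)) ^ p * ∫⁻ y, P t x y ^ p ∂m := by
        simp_rw [ENNReal.mul_rpow_of_nonneg _ _ hp0]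
        exact lintegral_const_mul' _ _ (by simp [hp0])
    _ ≤ ENNReal.ofReal (t ^ (1 - δ)) ^ p * (ENNReal.ofReal (C * t ^ (-q)) ^ (p - 1) * 1) := by
        gcongr
        exact (lintegral_rpow_le_mul_lintegral_of_le hp ENNReal.ofReal_ne_top hultra).trans
          (by gcongr)
    _ = ENNReal.ofReal (C ^ (p - 1)) := by
        rw [mul_one, ENNReal.ofReal_rpow_of_nonneg (by positivity) hp0,
          ENNReal.ofReal_rpow_of_nonneg (by positivity) hp1, ← ENNReal.ofReal_mul (by positivity),
          ← Real.rpow_mul ht.le, hweight]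

theorem lintegral_heatResolvent_rpow_le (m : Measure E) [SFinite m]
    (hmeas : Measurable fun q : ℝ × E × E => P q.1 q.2.1 q.2.2)
    (hsub : ∀ t > (0:ℝ), ∀ x : E, ∫⁻ y, P t x y ∂m ≤ 1) {C q : ℝ} (hC : 0 ≤ C)
    (hultra : ∀ t > (0:ℝ), ∀ x y : E, P t x y ≤ ENNReal.ofReal (C * t ^ (-q)))
    {δ p α : ℝ} (hp : 1 ≤ p) (hδ : 0 < δ) (hqδ : q * (p - 1) = (1 - δ) * p) (hα : 0 < α)
    (x : E) :
    ∫⁻ y, heatResolvent P α x y ^ p ∂m ≤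
      ENNReal.ofReal (C ^ (p - 1)) * ENNReal.ofReal (Real.Gamma δ * α ^ (-δ)) ^ p := by
  set A := ENNReal.ofReal (Real.Gamma δ * α ^ (-δ))
  set w := fun t : ℝ => ENNReal.ofReal (Real.exp (-(α * t)) * t ^ (δ - 1))
  -- exposes `P` as a composite of the jointly measurable map in `hmeas`, for `fun_prop`
  have hslice (t : ℝ) (y : E) : P t x y = P (t, x, y).1 (t, x, y).2.1 (t, x, y).2.2 := rfl
  calc ∫⁻ y, heatResolvent P α x y ^ p ∂m
      ≤ ∫⁻ y, A ^ (p - 1) *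
          (∫⁻ t in Ioi 0, w t * (ENNReal.ofReal (t ^ (1 - δ)) * P t x y) ^ p) ∂m :=
        lintegral_mono fun y => heatResolvent_rpow_le hα hδ hp (by simp only [hslice]; fun_prop)
    _ = A ^ (p - 1) *
          ∫⁻ t in Ioi 0, w t * ∫⁻ y, (ENNReal.ofReal (t ^ (1 - δ)) * P t x y) ^ p ∂m := by
        rw [lintegral_const_mul' _ _ (rpow_ne_top_of_nonneg (sub_nonneg.2 hp) ofReal_ne_top),
          lintegral_lintegral_swap]
        · exact congrArg _ (lintegral_congr fun t => lintegral_const_mul' _ _ ofReal_ne_top)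
        · simp only [w, hslice]; fun_prop
    _ ≤ A ^ (p - 1) * ∫⁻ t in Ioi 0, w t * ENNReal.ofReal (C ^ (p - 1)) := by
        refine mul_le_mul_right (setLIntegral_mono' measurableSet_Ioi fun t (ht : 0 < t) => ?_) _
        gcongr
        exact lintegral_weighted_heatKernel_rpow_le m hC hp ht hqδ (hsub t ht x) (hultra t ht x)
    _ = A ^ (p - 1) * (A * ENNReal.ofReal (C ^ (p - 1))) := by
        rw [lintegral_mul_const' _ _ ofReal_ne_top, lintegral_exp_neg_mul_mul_rpow_Ioi hα hδ]
    _ = ENNReal.ofReal (C ^ (p - 1)) * A ^ p := by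
        rw [show A ^ p = A ^ (p - 1) * A by
          simpa using rpow_add_of_nonneg (x := A) _ _ (sub_nonneg.2 hp) zero_le_one]
        ring

theorem rpow_lintegral_heatResolvent_rpow_le (m : Measure E) [SFinite m]
    (hmeas : Measurable fun q : ℝ × E × E => P q.1 q.2.1 q.2.2)
    (hsub : ∀ t > (0:ℝ), ∀ x : E, ∫⁻ y, P t x y ∂m ≤ 1) {C q : ℝ} (hC : 0 ≤ C)
    (hultra : ∀ t > (0:ℝ), ∀ x y : E, P t x y ≤ ENNReal.ofReal (C * t ^ (-q)))
    {δ p α : ℝ} (hp : 1 ≤ p) (hδ : 0 < δ) (hqδ : q * (p - 1) = (1 - δ) * p) (hα : 0 < α)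
    (x : E) :
    (∫⁻ y, heatResolvent P α x y ^ p ∂m) ^ (1 / p) ≤
      ENNReal.ofReal (C ^ ((p - 1) / p) * Real.Gamma δ * α ^ (-δ)) := by
  have hp0 : 0 < p := zero_lt_one.trans_le hp
  have hA : 0 ≤ Real.Gamma δ * α ^ (-δ) := by have := Real.Gamma_pos_of_pos hδ; positivity
  calc (∫⁻ y, heatResolvent P α x y ^ p ∂m) ^ (1 / p)
      ≤ (ENNReal.ofReal (C ^ (p - 1)) * ENNReal.ofReal (Real.Gamma δ * α ^ (-δ)) ^ p)
          ^ (1 / p) := by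
        gcongr
        exact lintegral_heatResolvent_rpow_le m hmeas hsub hC hultra hp hδ hqδ hα x
    _ = ENNReal.ofReal (C ^ ((p - 1) / p) * Real.Gamma δ * α ^ (-δ)) := by
        rw [ENNReal.mul_rpow_of_nonneg _ _ (by positivity), ← ENNReal.rpow_mul,
          mul_one_div_cancel hp0.ne', ENNReal.rpow_one,
          ENNReal.ofReal_rpow_of_nonneg (by positivity) (by positivity), ← Real.rpow_mul hC,
          mul_one_div, ← ENNReal.ofReal_mul (by positivity), mul_assoc]

end HeatResolvent

theorem stmt_9_general {E : Type*} [MeasurableSpace E] (m : Measure E) [SigmaFinite m]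
    (P : ℝ → E → E → ℝ≥0∞)
    (hmeas : Measurable (fun q : ℝ × E × E => P q.1 q.2.1 q.2.2))
    (hsub : ∀ t > (0:ℝ), ∀ x : E, ∫⁻ y, P t x y ∂m ≤ 1)
    (p' : ℝ) (hp' : 1 < p')
    (q : ℝ) (hq : q = p' / (p' - 1))
    (C : ℝ) (hC : 0 < C)
    (hultra : ∀ t > (0:ℝ), ∀ x y : E, P t x y ≤ ENNReal.ofReal (C * t ^ (-q)))
    (p : ℝ) (hp : 1 ≤ p) (hpp' : p < p')
    (δ : ℝ) (hδ : δ = 1 - q * (p - 1) / p) :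
    (∀ α > (0:ℝ),
      (⨆ x : E, (∫⁻ y, heatResolvent P α x y ^ p ∂m) ^ (1/p))
        ≤ ENNReal.ofReal (C ^ ((p - 1) / p) * Real.Gamma δ * α ^ (-δ))) ∧
    (∃ C' > (0:ℝ), ∃ α₀ > (0:ℝ), ∀ α ≥ α₀,
      (⨆ x : E, (∫⁻ y, heatResolvent P α x y ^ p ∂m) ^ (1/p))
        ≤ ENNReal.ofReal (C' * α ^ (-δ))) := by
  have hp0 : 0 < p := zero_lt_one.trans_le hp
  have hqδ : q * (p - 1) = (1 - δ) * p := by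
    rw [hδ]
    field_simp
    ring
  have hδpos : 0 < δ := by
    rw [hδ, hq, sub_pos, div_lt_one hp0, div_mul_eq_mul_div, div_lt_iff₀ (by linarith)]
    nlinarith
  have hbound (α : ℝ) (hα : 0 < α) :
      (⨆ x : E, (∫⁻ y, heatResolvent P α x y ^ p ∂m) ^ (1/p))
        ≤ ENNReal.ofReal (C ^ ((p - 1) / p) * Real.Gamma δ * α ^ (-δ)) :=
    iSup_le <| rpow_lintegral_heatResolvent_rpow_le m hmeas hsub hC.le hultra hp hδpos hqδ hα
  exact ⟨hbound, C ^ ((p - 1) / p) * Real.Gamma δ,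
    mul_pos (Real.rpow_pos_of_pos hC _) (Real.Gamma_pos_of_pos hδpos), 1, one_pos,
    fun α hα => hbound α (one_pos.trans_le hα)⟩

theorem stmt_9 {E : Type*} [MeasurableSpace E] (m : Measure E) [SigmaFinite m]
    (P : ℝ → E → E → ℝ≥0∞)
    (hmeas : Measurable (fun q : ℝ × E × E => P q.1 q.2.1 q.2.2))
    (hsymm : ∀ t > (0:ℝ), ∀ x y : E, P t x y = P t y x)
    (hck : ∀ s > (0:ℝ), ∀ t > (0:ℝ), ∀ x y : E,
      P (t + s) x y = ∫⁻ z, P t x z * P s z y ∂m)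
    (hsub : ∀ t > (0:ℝ), ∀ x : E, ∫⁻ y, P t x y ∂m ≤ 1)
    (p' : ℝ) (hp' : 1 < p')
    (q : ℝ) (hq : q = p' / (p' - 1))
    (C : ℝ) (hC : 0 < C)
    (hultra : ∀ t > (0:ℝ), ∀ x y : E, P t x y ≤ ENNReal.ofReal (C * t ^ (-q)))
    (p : ℝ) (hp : 1 ≤ p) (hpp' : p < p')
    (δ : ℝ) (hδ : δ = 1 - q * (p - 1) / p) :
    (∀ α > (0:ℝ),
      (⨆ x : E, (∫⁻ y, heatResolvent P α x y ^ p ∂m) ^ (1/p))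
        ≤ ENNReal.ofReal (C ^ ((p - 1) / p) * Real.Gamma δ * α ^ (-δ))) ∧
    (∃ C' > (0:ℝ), ∃ α₀ > (0:ℝ), ∀ α ≥ α₀,
      (⨆ x : E, (∫⁻ y, heatResolvent P α x y ^ p ∂m) ^ (1/p))
        ≤ ENNReal.ofReal (C' * α ^ (-δ))) :=
  stmt_9_general m P hmeas hsub p' hp' q hq C hC hultra p hp hpp' δ hδ
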